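/- arXiv:2512.05233 — 3 statements merged into one kernel-verified Lean document; each statement's English description precedes it below -/
import Mathlib

section
/- Let X ⊆ Y be metric spaces with d_X ≥ d_Y on X. Suppose X can be covered by balls (in the X-metric) of radius r centered at points x_1,…,x_m that are pairwise at distance ≥ r in d_X, and suppose the m-dimensional Hausdorff measure of each such ball is at most a, while the total Hausdorff measure of X exceeds a·β, where β is the δ-packing number of Y (the maximal number of points of Y pairwise at d_Y-distance > δ). Then there exist points x, y ∈ X with d_X(x,y) ≥ r and d_Y(x,y) ≤ δ, hence K(x,y) ≥ r/δ. -/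
open MeasureTheory Metric
open scoped ENNReal

/-- Packing lemma: if X (with intrinsic metric ≥ the ambient metric of Y, witnessed by the
nonexpansive inclusion ι) is covered by an r-separated family of r-balls, each of
m-dimensional Hausdorff measure at most a, while μH^m(X) > a·β where β is the δ-packing
number of Y, then there are points at intrinsic distance ≥ r and extrinsic distance ≤ δ,
hence distortion K ≥ r/δ. -/
theorem stmt1 {X Y : Type*} [MetricSpace X] [MetricSpace Y]
    [MeasurableSpace X] [BorelSpace X]
    (ι : X → Y) (hinj : Function.Injective ι)
    (hι : ∀ a b : X, dist (ι a) (ι b) ≤ dist a b)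
    (m : ℕ) (r δ : ℝ) (hr : 0 < r) (hδ : 0 < δ) (a : ℝ≥0∞) (β : ℕ)
    (hβ : ∀ t : Finset Y, (∀ p ∈ t, ∀ q ∈ t, p ≠ q → δ < dist p q) → t.card ≤ β)
    (s : Finset X)
    (hsep : ∀ p ∈ s, ∀ q ∈ s, p ≠ q → r ≤ dist p q)
    (hcover : ∀ z : X, ∃ p ∈ s, dist z p ≤ r)
    (hball : ∀ p : X, μH[m] (closedBall p r) ≤ a)
    (htot : a * β < μH[m] (Set.univ : Set X)) :
    ∃ p q : X, r ≤ dist p q ∧ dist (ι p) (ι q) ≤ δ ∧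
      δ⁻¹ * r ≤ dist p q / dist (ι p) (ι q) := by
  -- First: s.card > β
  have hcard : β < s.card := by
    by_contra h
    push_neg at h
    have hcov : (Set.univ : Set X) ⊆ ⋃ p ∈ s, closedBall p r := by
      intro z _
      obtain ⟨p, hp, hd⟩ := hcover z
      exact Set.mem_biUnion hp (mem_closedBall.mpr hd)
    have h1 : μH[m] (Set.univ : Set X) ≤ ∑ p ∈ s, μH[m] (closedBall p r) :=
      le_trans (measure_mono hcov) (measure_biUnion_finset_le _ _)
    have h2 : ∑ p ∈ s, μH[m] (closedBall p r) ≤ ∑ _p ∈ s, a :=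
      Finset.sum_le_sum fun p _ => hball p
    have h3 : (∑ _p ∈ s, a) = s.card * a := by simp [mul_comm]
    have h4 : (s.card : ℝ≥0∞) * a ≤ a * β := by
      rw [mul_comm]
      exact mul_le_mul_right (by exact_mod_cast h) a
    exact absurd (le_trans h1 (le_trans h2 (h3 ▸ h4))) (not_le.mpr htot)
  -- The image finset in Y has card > β, so it's not δ-separated
  classical
  have himg : (s.image ι).card = s.card := Finset.card_image_of_injective s hinj
  have : ¬ (∀ p ∈ s.image ι, ∀ q ∈ s.image ι, p ≠ q → δ < dist p q) := by
    intro h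
    have := hβ _ h
    omega
  push_neg at this
  obtain ⟨p', hp', q', hq', hne, hle⟩ := this
  obtain ⟨p, hp, rfl⟩ := Finset.mem_image.mp hp'
  obtain ⟨q, hq, rfl⟩ := Finset.mem_image.mp hq'
  have hpq : p ≠ q := fun h => hne (by rw [h])
  have hrpq : r ≤ dist p q := hsep p hp q hq hpq
  have hdpos : 0 < dist (ι p) (ι q) := dist_pos.mpr hne
  refine ⟨p, q, hrpq, hle, ?_⟩
  rw [div_eq_mul_inv, mul_comm]
  have h1 : δ⁻¹ ≤ (dist (ι p) (ι q))⁻¹ := by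
    exact inv_anti₀ hdpos hle
  exact mul_le_mul hrpq h1 (le_of_lt (inv_pos.mpr hδ)) dist_nonneg
end

section
/- Let X be a compact subset of ℝⁿ with extrinsic diameter D. Then X is contained in a closed ball of radius D / √(2(n+1)/n). In particular, if D < √(2(n+1)/n) then X is contained in a ball of radius strictly less than 1. -/
/-!
A smallest ball enclosing a finite set `s` has its centre `c` in the convex hull
of the points of `s` on its boundary sphere: otherwise `c` can be pushed towards that hull,
strictly decreasing every boundary distance. Writing `c = ∑ wₚ p` with weights on `k ≤ n + 1`
boundary points, the parallel axis theorem gives `∑ₚ wₚ ‖p - q‖² = 2R²` for every boundary point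
`q`; bounding the distances by `D` and averaging over `q` yields `2R² ≤ (1 - ∑ wₚ²) D²`, and
Cauchy–Schwarz `∑ wₚ² ≥ 1 / k` turns this into `2(n + 1) R² ≤ n D²`. Helly's theorem passes from
subsets of `n + 1` points to an arbitrary bounded set.
-/

open Metric Finset Filter Topology RealInnerProductSpace

/-- `closedBall c R` is a smallest closed ball containing `s`: no closed ball of radius `< R` does. -/
def IsMinimalEnclosingBall {α : Type*} [MetricSpace α] (s : Finset α) (c : α) (R : ℝ) : Prop :=
  (∀ p ∈ s, dist p c ≤ R) ∧ ∀ y, ∃ p ∈ s, R ≤ dist p y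

theorem Finset.exists_isMinimalEnclosingBall {α : Type*} [MetricSpace α] [ProperSpace α]
    {s : Finset α} (hs : s.Nonempty) : ∃ c R, IsMinimalEnclosingBall s c R := by
  obtain ⟨p₀, hp₀⟩ := id hs
  set f : α → ℝ := fun y => s.sup' hs fun p => dist p y
  have hf : Continuous f := Continuous.finset_sup'_apply hs fun p _ => by fun_prop
  have hcoercive : Tendsto f (cocompact α) atTop :=
    tendsto_atTop_mono (fun y => le_sup' (fun p => dist p y) hp₀)
      (tendsto_dist_left_cocompact_atTop p₀)
  have : Nonempty α := ⟨p₀⟩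
  obtain ⟨c, hc⟩ := hf.exists_forall_le hcoercive
  refine ⟨c, f c, fun p hp => le_sup' (fun p => dist p c) hp, fun y => ?_⟩
  obtain ⟨p, hp, hpy⟩ := exists_mem_eq_sup' hs fun p => dist p y
  exact ⟨p, hp, hpy ▸ hc y⟩

section InnerProductSpace

variable {F : Type*} [NormedAddCommGroup F] [InnerProductSpace ℝ F]

theorem exists_inner_pos_of_notMem_convex [CompleteSpace F] {t : Set F} {c : F}
    (ht : Convex ℝ t) (htc : IsClosed t) (hc : c ∉ t) : ∃ v : F, ∀ p ∈ t, 0 < ⟪v, p - c⟫ := by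
  obtain ⟨f, u, hfc, hft⟩ := geometric_hahn_banach_point_closed ht htc hc
  refine ⟨(InnerProductSpace.toDual ℝ F).symm f, fun p hp => ?_⟩
  rw [inner_sub_right, InnerProductSpace.toDual_symm_apply, InnerProductSpace.toDual_symm_apply]
  linarith [hft p hp]

theorem eventually_dist_add_smul_lt {p c v : F} (h : 0 < ⟪v, p - c⟫) :
    ∀ᶠ t in 𝓝[>] (0 : ℝ), dist p (c + t • v) < dist p c := by
  have hε : 0 < 2 * ⟪v, p - c⟫ / (‖v‖ ^ 2 + 1) := by positivity
  filter_upwards [Ioo_mem_nhdsGT hε] with t ⟨ht₀, htε⟩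
  have hsq : dist p (c + t • v) ^ 2 = dist p c ^ 2 - t * (2 * ⟪v, p - c⟫ - t * ‖v‖ ^ 2) := by
    rw [dist_eq_norm, dist_eq_norm, show p - (c + t • v) = (p - c) - t • v by abel,
      norm_sub_sq_real, inner_smul_right, norm_smul, Real.norm_of_nonneg ht₀.le, real_inner_comm]
    ring
  have htv : t * ‖v‖ ^ 2 < 2 * ⟪v, p - c⟫ := by
    rw [lt_div_iff₀ (by positivity)] at htε
    nlinarith [sq_nonneg ‖v‖]
  refine lt_of_pow_lt_pow_left₀ 2 dist_nonneg ?_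
  rw [hsq]
  nlinarith

theorem IsMinimalEnclosingBall.mem_convexHull_farthest [CompleteSpace F] {s : Finset F} {c : F}
    {R : ℝ} (h : IsMinimalEnclosingBall s c R) :
    c ∈ convexHull ℝ (↑(s.filter fun p => dist p c = R) : Set F) := by
  by_contra hc
  obtain ⟨v, hv⟩ := exists_inner_pos_of_notMem_convex (convex_convexHull ℝ _)
    ((finite_toSet _).isCompact_convexHull (𝕜 := ℝ)).isClosed hc
  have hcloser : ∀ p ∈ s, ∀ᶠ t in 𝓝[>] (0 : ℝ), dist p (c + t • v) < R := by
    intro p hp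
    rcases (h.1 p hp).lt_or_eq with hlt | heq
    · have hcont : Continuous fun t : ℝ => dist p (c + t • v) := by fun_prop
      refine eventually_nhdsWithin_of_eventually_nhds
        (hcont.continuousAt.eventually_lt continuousAt_const ?_)
      simpa using hlt
    · rw [← heq]
      exact eventually_dist_add_smul_lt (hv p (subset_convexHull ℝ _ (by simp [hp, heq])))
  obtain ⟨t, ht⟩ := ((Finset.eventually_all s).2 hcloser).exists
  obtain ⟨p, hp, hRp⟩ := h.2 (c + t • v)
  exact (ht p hp).not_ge hRp

theorem sum_mul_norm_sub_sq_eq {ι : Type*} {T : Finset ι} {w : ι → ℝ} {x : ι → F} {c : F}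
    (hw : ∑ i ∈ T, w i = 1) (hc : ∑ i ∈ T, w i • x i = c) (q : F) :
    ∑ i ∈ T, w i * ‖x i - q‖ ^ 2 = ∑ i ∈ T, w i * ‖x i - c‖ ^ 2 + ‖q - c‖ ^ 2 := by
  have hbal : ∑ i ∈ T, w i • (x i - c) = 0 := by
    simp only [smul_sub, sum_sub_distrib, hc, ← sum_smul, hw, one_smul, sub_self]
  have hterm : ∀ i ∈ T, w i * ‖x i - q‖ ^ 2 =
      w i * ‖x i - c‖ ^ 2 - 2 * ⟪w i • (x i - c), q - c⟫ + w i * ‖q - c‖ ^ 2 := by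
    intro i _
    rw [show x i - q = (x i - c) - (q - c) by abel, norm_sub_sq_real, real_inner_smul_left]
    ring
  rw [sum_congr rfl hterm, sum_add_distrib, sum_sub_distrib, ← mul_sum, ← sum_inner, hbal,
    inner_zero_left, ← sum_mul, hw]
  ring

theorem two_mul_card_mul_sq_le_of_mem_convexHull {T : Finset F} {c : F} {R D : ℝ} {m : ℕ}
    (hdist : ∀ p ∈ T, dist p c = R) (hdiam : ∀ p ∈ T, ∀ q ∈ T, dist p q ≤ D)
    (hc : c ∈ convexHull ℝ (T : Set F)) (hcard : #T ≤ m + 1) :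
    2 * (m + 1) * R ^ 2 ≤ m * D ^ 2 := by
  classical
  rw [Finset.convexHull_eq] at hc
  obtain ⟨w, hw₀, hw₁, hwc⟩ := hc
  rw [centerMass_eq_of_sum_1 _ _ hw₁] at hwc
  simp only [id] at hwc
  have hnorm : ∀ p ∈ T, ‖p - c‖ = R := fun p hp => by rw [← dist_eq_norm, hdist p hp]
  have hvertex : ∀ q ∈ T, 2 * R ^ 2 ≤ (1 - w q) * D ^ 2 := by
    intro q hq
    calc 2 * R ^ 2 = ∑ p ∈ T, w p * ‖p - q‖ ^ 2 := by
          rw [sum_mul_norm_sub_sq_eq hw₁ hwc, sum_congr rfl fun p hp => by rw [hnorm p hp],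
            ← sum_mul, hw₁, hnorm q hq]
          ring
      _ = ∑ p ∈ T.erase q, w p * ‖p - q‖ ^ 2 := by
          rw [← add_sum_erase _ _ hq, sub_self, norm_zero]
          ring
      _ ≤ ∑ p ∈ T.erase q, w p * D ^ 2 := by
          refine sum_le_sum fun p hp => mul_le_mul_of_nonneg_left ?_ (hw₀ p (mem_of_mem_erase hp))
          rw [← dist_eq_norm]
          exact pow_le_pow_left₀ dist_nonneg (hdiam p (mem_of_mem_erase hp) q hq) 2
      _ = (1 - w q) * D ^ 2 := by
          rw [← sum_mul, ← hw₁, ← add_sum_erase _ _ hq]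
          ring
  have havg : 2 * R ^ 2 ≤ (1 - ∑ q ∈ T, w q ^ 2) * D ^ 2 :=
    calc 2 * R ^ 2 = ∑ q ∈ T, w q * (2 * R ^ 2) := by rw [← sum_mul, hw₁, one_mul]
      _ ≤ ∑ q ∈ T, w q * ((1 - w q) * D ^ 2) :=
          sum_le_sum fun q hq => mul_le_mul_of_nonneg_left (hvertex q hq) (hw₀ q hq)
      _ = ∑ q ∈ T, (w q * D ^ 2 - w q ^ 2 * D ^ 2) := sum_congr rfl fun q _ => by ring
      _ = (1 - ∑ q ∈ T, w q ^ 2) * D ^ 2 := by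
          rw [sum_sub_distrib, ← sum_mul, ← sum_mul, hw₁]
          ring
  have hcauchy : 1 ≤ (m + 1) * ∑ q ∈ T, w q ^ 2 := by
    have := sq_sum_le_card_mul_sum_sq (s := T) (f := w)
    rw [hw₁, one_pow] at this
    exact this.trans (mul_le_mul_of_nonneg_right (by exact_mod_cast hcard)
      (sum_nonneg fun q _ => sq_nonneg _))
  nlinarith [sq_nonneg D]

variable [FiniteDimensional ℝ F]

theorem Finset.exists_forall_dist_le_mul_sqrt (s : Finset F) {D : ℝ} {m : ℕ}
    (hcard : #s ≤ m + 1) (hdiam : ∀ p ∈ s, ∀ q ∈ s, dist p q ≤ D) :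
    ∃ c, ∀ p ∈ s, dist p c ≤ D * √(m / (2 * (m + 1))) := by
  rcases s.eq_empty_or_nonempty with rfl | hs
  · exact ⟨0, by simp⟩
  obtain ⟨p₀, hp₀⟩ := id hs
  have hD : 0 ≤ D := dist_self p₀ ▸ hdiam p₀ hp₀ p₀ hp₀
  obtain ⟨c, R, hball⟩ := s.exists_isMinimalEnclosingBall hs
  have hfarthest := two_mul_card_mul_sq_le_of_mem_convexHull (m := m)
    (fun p hp => (mem_filter.1 hp).2)
    (fun p hp q hq => hdiam p (mem_of_mem_filter p hp) q (mem_of_mem_filter q hq))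
    hball.mem_convexHull_farthest ((card_filter_le _ _).trans hcard)
  refine ⟨c, fun p hp => (hball.1 p hp).trans ?_⟩
  calc R ≤ |R| := le_abs_self R
    _ ≤ √(D ^ 2 * (m / (2 * (m + 1)))) := by
        refine Real.abs_le_sqrt ?_
        rw [mul_div_assoc', le_div_iff₀ (by positivity)]
        linarith
    _ = D * √(m / (2 * (m + 1))) := by rw [Real.sqrt_mul (sq_nonneg D), Real.sqrt_sq hD]

theorem exists_subset_closedBall_diam_mul_sqrt {X : Set F} (hX : Bornology.IsBounded X) :
    ∃ c, X ⊆ closedBall c (diam X * √(Module.finrank ℝ F / (2 * (Module.finrank ℝ F + 1)))) := by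
  classical
  set r := diam X * √(Module.finrank ℝ F / (2 * (Module.finrank ℝ F + 1)))
  obtain ⟨c, hc⟩ : (⋂ x : X, closedBall (x : F) r).Nonempty := by
    refine Convex.helly_theorem_compact' (𝕜 := ℝ) (fun _ => convex_closedBall _ _)
      (fun _ => isCompact_closedBall _ _) fun I hI => ?_
    obtain ⟨c, hc⟩ := (I.image Subtype.val).exists_forall_dist_le_mul_sqrt
      (card_image_le.trans hI) fun p hp q hq => by
        obtain ⟨x, -, rfl⟩ := mem_image.1 hp
        obtain ⟨y, -, rfl⟩ := mem_image.1 hq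
        exact dist_le_diam_of_mem hX x.2 y.2
    refine ⟨c, Set.mem_iInter₂.2 fun x hx => ?_⟩
    rw [mem_closedBall, dist_comm]
    exact hc _ (mem_image_of_mem _ hx)
  refine ⟨c, fun x hx => ?_⟩
  rw [mem_closedBall, dist_comm]
  exact Set.mem_iInter.1 hc ⟨x, hx⟩

end InnerProductSpace

theorem stmt4_general (n : ℕ) (X : Set (EuclideanSpace ℝ (Fin n)))
    (hX : IsCompact X) (D : ℝ) (hD : Metric.diam X = D) :
    (∃ c, X ⊆ Metric.closedBall c (D / Real.sqrt (2 * (n + 1) / n))) ∧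
      (D < Real.sqrt (2 * (n + 1) / n) →
        ∃ c, ∃ ρ : ℝ, ρ < 1 ∧ X ⊆ Metric.closedBall c ρ) := by
  obtain ⟨c, hc⟩ := exists_subset_closedBall_diam_mul_sqrt hX.isBounded
  have hradius : D * √(n / (2 * (n + 1))) = D / √(2 * (n + 1) / n) := by
    rw [div_eq_mul_inv D, ← Real.sqrt_inv, inv_div]
  rw [finrank_euclideanSpace_fin, hD, hradius] at hc
  refine ⟨⟨c, hc⟩, fun hlt => ⟨c, _, ?_, hc⟩⟩
  have hD₀ : 0 ≤ D := hD ▸ diam_nonneg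
  exact (div_lt_one (hD₀.trans_lt hlt)).2 hlt

/-- Jung's theorem form: a compact X ⊂ ℝⁿ of extrinsic diameter D is contained in a closed
ball of radius D / √(2(n+1)/n); in particular if D < √(2(n+1)/n) =: J_n then X lies in a
ball of radius strictly less than 1. -/
theorem stmt4 (n : ℕ) (hn : 0 < n) (X : Set (EuclideanSpace ℝ (Fin n)))
    (hX : IsCompact X) (D : ℝ) (hD : Metric.diam X = D) :
    (∃ c, X ⊆ Metric.closedBall c (D / Real.sqrt (2 * (n + 1) / n))) ∧
      (D < Real.sqrt (2 * (n + 1) / n) →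
        ∃ c, ∃ ρ : ℝ, ρ < 1 ∧ X ⊆ Metric.closedBall c ρ) :=
  stmt4_general n X hX D hD
end

section
/- Under the hypotheses of the packing-based theorem with the volume lower bound strengthened to μ(X) > a·(β + N) for an integer N > 0 (instead of μ(X) > a·β), any maximal r-separated set in X contains at least β + N + 1 points, and hence one can find at least N + 1 distinct pairs of points (x_i, y_i), each pair satisfying d_X(x_i,y_i) ≥ r and d_Y(x_i,y_i) ≤ δ, with the pairs using pairwise distinct points except possibly one shared point between consecutive pairs. -/
/-!
Covering `X` by the closed `r`-balls around `s` gives `μ X ≤ |s| a`, so `|s| > β + N`.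
Join two points of `X` when their images are `δ`-close; an independent set of this graph is
`δ`-separated in `Y`, hence has at most `β` points. Cover `s` greedily by paths: extend the current
path while its end has an unused neighbour, and when it has none, put that end into an independent
set (all later vertices are unused ones). The paths then have at least `|s| - β ≥ N + 1` edges, and
listed path by path they are the required pairs; `d_X ≥ r` on them because `s` is `r`-separated.
-/

open MeasureTheory Metric
open scoped ENNReal

section PathChain

variable {V : Type*}

/-- The pairs are the edges of vertex-disjoint paths, listed path by path, each path in order. -/
def IsPathChain : List (V × V) → Prop
  | [] => True
  | e :: l => (∀ f ∈ l, e.1 ∉ ({f.1, f.2} : Set V)) ∧ (∀ f ∈ l.tail, e.2 ∉ ({f.1, f.2} : Set V)) ∧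
      IsPathChain l

namespace IsPathChain

theorem fst_notMem : ∀ {l : List (V × V)}, IsPathChain l → ∀ {i j : ℕ} (hij : i < j)
    (hj : j < l.length), (l[i]'(hij.trans hj)).1 ∉ ({l[j].1, l[j].2} : Set V)
  | _ :: _, ⟨hfst, _, _⟩, 0, _ + 1, _, _ => hfst _ (List.getElem_mem _)
  | _ :: _, ⟨_, _, hl⟩, _ + 1, _ + 1, hij, _ => hl.fst_notMem (by omega) _

theorem snd_notMem : ∀ {l : List (V × V)}, IsPathChain l → ∀ {i j : ℕ} (hij : i + 1 < j)
    (hj : j < l.length), (l[i]'(by omega)).2 ∉ ({l[j].1, l[j].2} : Set V)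
  | _ :: _ :: _, ⟨_, hsnd, _⟩, 0, _ + 2, _, _ => hsnd _ (List.getElem_mem _)
  | _ :: _, _, 0, 0, hij, _ | _ :: _, _, 0, 1, hij, _ => by omega
  | _ :: _, ⟨_, _, hl⟩, _ + 1, _ + 1, hij, _ => hl.snd_notMem (by omega) _

theorem inter_eq_empty {l : List (V × V)} (hl : IsPathChain l) {i j : ℕ} (hij : i + 1 < j)
    (hj : j < l.length) :
    ({(l[i]'(by omega)).1, (l[i]'(by omega)).2} ∩ {l[j].1, l[j].2} : Set V) = ∅ := by
  refine Set.eq_empty_of_forall_notMem fun x ⟨hxi, hxj⟩ => ?_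
  rcases hxi with rfl | rfl
  · exact hl.fst_notMem (by omega) hj hxj
  · exact hl.snd_notMem hij hj hxj

theorem pair_ne {l : List (V × V)} (hl : IsPathChain l) {i j : ℕ} (hi : i < l.length)
    (hj : j < l.length) (hij : i ≠ j) :
    ({l[i].1, l[i].2} : Set V) ≠ {l[j].1, l[j].2} := by
  rcases hij.lt_or_gt with h | h
  · exact fun heq => hl.fst_notMem h hj (heq ▸ Set.mem_insert _ _)
  · exact fun heq => hl.fst_notMem h hi (heq ▸ Set.mem_insert _ _)

end IsPathChain

theorem notMem_pair_of_mem_erase [DecidableEq V] {S : Finset V} {t : V} {e : V × V}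
    (he : e.1 ∈ S.erase t ∧ e.2 ∈ S.erase t) : t ∉ ({e.1, e.2} : Set V) := by
  rintro (rfl | rfl)
  exacts [S.notMem_erase _ he.1, S.notMem_erase _ he.2]

namespace SimpleGraph

variable [DecidableEq V] (G : SimpleGraph V)

theorem exists_isPathChain_of_mem (S : Finset V) : ∀ t ∈ S,
    ∃ (l : List (V × V)) (J : Finset V), IsPathChain l ∧
      (∀ e ∈ l, G.Adj e.1 e.2 ∧ e.1 ∈ S ∧ e.2 ∈ S) ∧
      (∀ e ∈ l.tail, t ∉ ({e.1, e.2} : Set V)) ∧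
      J ⊆ S ∧ G.IsIndepSet J ∧ S.card ≤ l.length + J.card := by
  induction S using Finset.strongInduction with
  | H S ih =>
  intro t ht
  have hcard : S.card = (S.erase t).card + 1 := (Finset.card_erase_add_one ht).symm
  by_cases hnbr : ∃ u ∈ S.erase t, G.Adj t u
  · -- extend the current path by the edge `tu` and continue it from `u`
    obtain ⟨u, hu, htu⟩ := hnbr
    obtain ⟨l, J, hl, hedges, hstart, hJS, hJ, hlJ⟩ := ih _ (S.erase_ssubset ht) u hu
    have ht_notMem : ∀ e ∈ l, t ∉ ({e.1, e.2} : Set V) := fun e he =>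
      notMem_pair_of_mem_erase (hedges e he).2
    refine ⟨(t, u) :: l, J, ⟨ht_notMem, hstart, hl⟩, ?_, fun e he => ht_notMem e he,
      hJS.trans (S.erase_subset t), hJ, by simp only [List.length_cons]; omega⟩
    rintro e (_ | ⟨_, he⟩)
    · exact ⟨htu, ht, S.mem_of_mem_erase hu⟩
    · obtain ⟨hadj, h1, h2⟩ := hedges e he
      exact ⟨hadj, S.mem_of_mem_erase h1, S.mem_of_mem_erase h2⟩
  · -- the current path ends at `t`, which has no neighbour left, so it joins the independent set
    push Not at hnbr
    obtain ⟨l, J, hl, hedges, hJS, hJ, hlJ⟩ : ∃ (l : List (V × V)) (J : Finset V), IsPathChain l ∧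
        (∀ e ∈ l, G.Adj e.1 e.2 ∧ e.1 ∈ S.erase t ∧ e.2 ∈ S.erase t) ∧
        J ⊆ S.erase t ∧ G.IsIndepSet J ∧ (S.erase t).card ≤ l.length + J.card := by
      rcases (S.erase t).eq_empty_or_nonempty with h | ⟨v, hv⟩
      · exact ⟨[], ∅, trivial, by simp, by simp, by simp, by simp [h]⟩
      · obtain ⟨l, J, hl, hedges, -, hJS, hJ, hlJ⟩ := ih _ (S.erase_ssubset ht) v hv
        exact ⟨l, J, hl, hedges, hJS, hJ, hlJ⟩
    have htJ : t ∉ J := fun h => Finset.notMem_erase t S (hJS h)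
    refine ⟨l, insert t J, hl, ?_, ?_, ?_, ?_, ?_⟩
    · exact fun e he => ⟨(hedges e he).1, S.mem_of_mem_erase (hedges e he).2.1,
        S.mem_of_mem_erase (hedges e he).2.2⟩
    · exact fun e he => notMem_pair_of_mem_erase (hedges e (List.mem_of_mem_tail he)).2
    · exact Finset.insert_subset ht (hJS.trans (S.erase_subset t))
    · rw [Finset.coe_insert, IsIndepSet, Set.pairwise_insert]
      exact ⟨hJ, fun v hv _ => ⟨hnbr v (hJS hv), fun h => hnbr v (hJS hv) h.symm⟩⟩
    · rw [Finset.card_insert_of_notMem htJ]; omega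

theorem exists_isPathChain (S : Finset V) :
    ∃ (l : List (V × V)) (J : Finset V), IsPathChain l ∧
      (∀ e ∈ l, G.Adj e.1 e.2 ∧ e.1 ∈ S ∧ e.2 ∈ S) ∧
      J ⊆ S ∧ G.IsIndepSet J ∧ S.card ≤ l.length + J.card := by
  rcases S.eq_empty_or_nonempty with rfl | ⟨t, ht⟩
  · exact ⟨[], ∅, trivial, by simp, by simp, by simp, by simp⟩
  · obtain ⟨l, J, hl, hedges, -, hJS, hJ, hlJ⟩ := G.exists_isPathChain_of_mem S t ht
    exact ⟨l, J, hl, hedges, hJS, hJ, hlJ⟩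

end SimpleGraph

end PathChain

section Metric

variable {X Y : Type*}

def proximityGraph [PseudoMetricSpace Y] (f : X → Y) (δ : ℝ) : SimpleGraph X where
  Adj p q := p ≠ q ∧ dist (f p) (f q) ≤ δ
  symm := ⟨fun _ _ h => ⟨h.1.symm, dist_comm (f _) (f _) ▸ h.2⟩⟩
  loopless := ⟨fun _ h => h.1 rfl⟩

theorem proximityGraph_adj [PseudoMetricSpace Y] {f : X → Y} {δ : ℝ} {p q : X} :
    (proximityGraph f δ).Adj p q ↔ p ≠ q ∧ dist (f p) (f q) ≤ δ :=
  Iff.rfl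

theorem card_le_of_isIndepSet_proximityGraph [PseudoMetricSpace Y] {f : X → Y}
    (hf : Function.Injective f) {δ : ℝ} {β : ℕ}
    (hβ : ∀ t : Finset Y, (∀ p ∈ t, ∀ q ∈ t, p ≠ q → δ < dist p q) → t.card ≤ β)
    {J : Finset X} (hJ : (proximityGraph f δ).IsIndepSet J) : J.card ≤ β := by
  classical
  rw [← Finset.card_image_of_injective J hf]
  refine hβ _ ?_
  simp only [Finset.mem_image]
  rintro _ ⟨p, hp, rfl⟩ _ ⟨q, hq, rfl⟩ hpq
  have hpq' : p ≠ q := fun h => hpq (h ▸ rfl)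
  exact not_le.mp fun h => hJ hp hq hpq' (proximityGraph_adj.mpr ⟨hpq', h⟩)

theorem measure_univ_le_card_mul [PseudoMetricSpace X] [MeasurableSpace X] (μ : Measure X)
    {r : ℝ} {a : ℝ≥0∞} (hball : ∀ p, μ (closedBall p r) ≤ a) (s : Finset X)
    (hcover : ∀ z : X, ∃ p ∈ s, dist z p ≤ r) : μ Set.univ ≤ s.card * a :=
  calc μ Set.univ ≤ μ (⋃ p ∈ s, closedBall p r) := measure_mono fun z _ => by
        obtain ⟨p, hp, hzp⟩ := hcover z
        exact Set.mem_biUnion hp (mem_closedBall.mpr hzp)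
    _ ≤ ∑ p ∈ s, μ (closedBall p r) := measure_biUnion_finset_le s _
    _ ≤ ∑ _p ∈ s, a := Finset.sum_le_sum fun p _ => hball p
    _ = s.card * a := by rw [Finset.sum_const, nsmul_eq_mul]

end Metric

theorem stmt18_general {X Y : Type*} [MetricSpace X] [MetricSpace Y] [MeasurableSpace X]
    (ι : X → Y) (hinj : Function.Injective ι)
    (μ : Measure X) (r δ : ℝ) (a : ℝ≥0∞) (β N : ℕ)
    (hball : ∀ p : X, μ (closedBall p r) ≤ a)
    (hβ : ∀ t : Finset Y, (∀ p ∈ t, ∀ q ∈ t, p ≠ q → δ < dist p q) → t.card ≤ β)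
    (htot : a * (β + N) < μ Set.univ)
    (s : Finset X)
    (hsep : ∀ p ∈ s, ∀ q ∈ s, p ≠ q → r ≤ dist p q)
    (hcover : ∀ z : X, ∃ p ∈ s, dist z p ≤ r) :
    β + N + 1 ≤ s.card ∧
      ∃ pr : Fin (N + 1) → X × X,
        (∀ i, r ≤ dist (pr i).1 (pr i).2 ∧ dist (ι (pr i).1) (ι (pr i).2) ≤ δ) ∧
        (∀ i j : Fin (N + 1), (i : ℕ) + 1 < (j : ℕ) →
          ({(pr i).1, (pr i).2} ∩ {(pr j).1, (pr j).2} : Set X) = ∅) ∧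
        (∀ i j : Fin (N + 1), i ≠ j →
          ({(pr i).1, (pr i).2} : Set X) ≠ {(pr j).1, (pr j).2}) := by
  classical
  have hcard : β + N < s.card := by
    have h := htot.trans_le (measure_univ_le_card_mul μ hball s hcover)
    rw [mul_comm] at h
    exact_mod_cast lt_of_mul_lt_mul_right' h
  obtain ⟨l, J, hl, hedges, -, hJ, hlJ⟩ := (proximityGraph ι δ).exists_isPathChain s
  have hlength : N + 1 ≤ l.length := by
    have := card_le_of_isIndepSet_proximityGraph hinj hβ hJ
    omega
  have hi (i : Fin (N + 1)) : (i : ℕ) < l.length := i.isLt.trans_le hlength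
  refine ⟨hcard, fun i => l[i]'(hi i), fun i => ?_, fun i j hij => hl.inter_eq_empty hij (hi j),
    fun i j hij => hl.pair_ne (hi i) (hi j) (Fin.val_ne_of_ne hij)⟩
  obtain ⟨hadj, h1, h2⟩ := hedges _ (List.getElem_mem (hi i))
  obtain ⟨hne, hclose⟩ := proximityGraph_adj.mp hadj
  exact ⟨hsep _ h1 _ h2 hne, hclose⟩

/-- Strengthened packing theorem: if μ(X) > a·(β+N) (N > 0 an integer) then any maximal
r-separated set in X has at least β+N+1 points, and one can find N+1 distinct pairs, each
at intrinsic distance ≥ r and extrinsic distance ≤ δ, with non-consecutive pairs using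
pairwise disjoint point sets (consecutive pairs may share one point). -/
theorem stmt18 {X Y : Type*} [MetricSpace X] [MetricSpace Y] [MeasurableSpace X]
    (ι : X → Y) (hinj : Function.Injective ι)
    (hι : ∀ a b : X, dist (ι a) (ι b) ≤ dist a b)
    (μ : Measure X) (r δ : ℝ) (hr : 0 < r) (hδ : 0 < δ) (a : ℝ≥0∞) (β N : ℕ) (hN : 0 < N)
    (hball : ∀ p : X, μ (closedBall p r) ≤ a)
    (hβ : ∀ t : Finset Y, (∀ p ∈ t, ∀ q ∈ t, p ≠ q → δ < dist p q) → t.card ≤ β)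
    (htot : a * (β + N) < μ Set.univ)
    (s : Finset X)
    (hsep : ∀ p ∈ s, ∀ q ∈ s, p ≠ q → r ≤ dist p q)
    (hcover : ∀ z : X, ∃ p ∈ s, dist z p ≤ r) :
    β + N + 1 ≤ s.card ∧
      ∃ pr : Fin (N + 1) → X × X,
        (∀ i, r ≤ dist (pr i).1 (pr i).2 ∧ dist (ι (pr i).1) (ι (pr i).2) ≤ δ) ∧
        (∀ i j : Fin (N + 1), (i : ℕ) + 1 < (j : ℕ) →
          ({(pr i).1, (pr i).2} ∩ {(pr j).1, (pr j).2} : Set X) = ∅) ∧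
        (∀ i j : Fin (N + 1), i ≠ j →
          ({(pr i).1, (pr i).2} : Set X) ≠ {(pr j).1, (pr j).2}) :=
  stmt18_general ι hinj μ r δ a β N hball hβ htot s hsep hcover
end
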